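/- arXiv:2403.06619 — 2 statements merged into one kernel-verified Lean document; each statement's English description precedes it below -/
import Mathlib

section
/- Suppose the full 2-torsion of E is k-rational, i.e. x³ + a·x + b = (x − γ₁)(x − γ₂)(x − γ₃) with γ₁, γ₂, γ₃ ∈ k, and let Q = (x_Q, y_Q) ∈ E(k) be an affine point with y_Q ≠ 0. Then the set {P ∈ E(k) : 2•P = Q} and the set {(ω₁, ω₂) ∈ k × k : ω₁² = x_Q − γ₁ and ω₂² = x_Q − γ₂} are finite and have the same number of elements. -/
open Polynomial

/-- The elliptic curve `y² = x³ + a·x + b` in short Weierstrass form. -/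
def shortWCurve {k : Type*} [Field k] (a b : k) : WeierstrassCurve.Affine k :=
  { a₁ := 0, a₂ := 0, a₃ := 0, a₄ := a, a₆ := b }

/-!
Write `x³ + a x + b = (x - γ₁)(x - γ₂)(x - γ₃)`. A triple `ω₁, ω₂, ω₃` with `ωᵢ² = x_Q - γᵢ` and
`ω₁ ω₂ ω₃ = y_Q` (so `ω₃` is determined by `ω₁, ω₂`) gives the point
`x = x_Q + ω₁ω₂ + ω₁ω₃ + ω₂ω₃`, `y = (ω₁ + ω₂)(ω₁ + ω₃)(ω₂ + ω₃)`, for which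
`x - γᵢ = (ωᵢ + ωⱼ)(ωᵢ + ωₖ)`; it lies on `E`, its tangent has slope `ω₁ + ω₂ + ω₃`, and the
doubling formulas give `2 • (x, y) = Q`. Conversely, the triple is read off a half `P = (x, y)` of
`Q` as `ωᵢ = ℓ - y / (x - γᵢ)` with `ℓ` the tangent slope at `P`, since `y / (x - γᵢ) = ωⱼ + ωₖ`.
Both assignments are mutually inverse, so `P ↦ (ω₁, ω₂)` is a bijection.
-/

open WeierstrassCurve.Affine

section Doubling

variable {k : Type*} [Field k] {a b x y : k}

lemma shortWCurve_equation_iff :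
    (shortWCurve a b).Equation x y ↔ y ^ 2 = x ^ 3 + a * x + b := by
  simp [equation_iff, shortWCurve]

lemma shortWCurve_negY : (shortWCurve a b).negY x y = -y := by
  simp [negY, shortWCurve]

lemma shortWCurve_nonsingular_of_Y_ne_zero (h2 : (2 : k) ≠ 0) (hy : y ≠ 0)
    (h : y ^ 2 = x ^ 3 + a * x + b) : (shortWCurve a b).Nonsingular x y := by
  refine (nonsingular_iff' _ _).2 ⟨shortWCurve_equation_iff.2 h, Or.inr ?_⟩
  simpa [shortWCurve] using mul_ne_zero h2 hy

variable [DecidableEq k]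

lemma shortWCurve_two_nsmul_some_of_Y_eq_zero (h : (shortWCurve a b).Nonsingular x 0) :
    2 • Point.some x 0 h = 0 :=
  (two_nsmul _).trans (Point.add_self_of_Y_eq (by rw [shortWCurve_negY, neg_zero]))

lemma shortWCurve_two_nsmul_some_eq_some_iff (h2 : (2 : k) ≠ 0) {ℓ x' y' : k}
    (h : (shortWCurve a b).Nonsingular x y) (h' : (shortWCurve a b).Nonsingular x' y')
    (hy : y ≠ 0) (hℓ : ℓ * (2 * y) = 3 * x ^ 2 + a) :
    2 • Point.some x y h = Point.some x' y' h' ↔ ℓ ^ 2 - 2 * x = x' ∧ ℓ * (x - x') - y = y' := by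
  have hy' : y ≠ (shortWCurve a b).negY x y := by
    rw [shortWCurve_negY]
    exact fun h => mul_ne_zero h2 hy (by linear_combination h)
  have hslope : (shortWCurve a b).slope x x y y = ℓ := by
    rw [slope_of_Y_ne rfl hy', shortWCurve_negY, eq_comm,
      eq_div_iff (by simpa [two_mul] using mul_ne_zero h2 hy)]
    simp only [shortWCurve]
    linear_combination hℓ
  rw [two_nsmul, Point.add_self_of_Y_ne hy', Point.some.injEq, addY, negAddY, hslope,
    shortWCurve_negY]
  simp only [addX, shortWCurve]
  constructor <;> rintro ⟨rfl, rfl⟩ <;> constructor <;> ring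

end Doubling

section Roots

variable {k : Type*} [Field k] {a b γ₁ γ₂ γ₃ : k}

lemma depressed_cubic_vieta
    (h : (X ^ 3 + C a * X + C b : k[X]) = (X - C γ₁) * (X - C γ₂) * (X - C γ₃)) :
    γ₁ + γ₂ + γ₃ = 0 ∧ a = γ₁ * γ₂ + γ₁ * γ₃ + γ₂ * γ₃ ∧ b = -(γ₁ * γ₂ * γ₃) := by
  have hexp : (X - C γ₁) * (X - C γ₂) * (X - C γ₃) = X ^ 3 - C (γ₁ + γ₂ + γ₃) * X ^ 2
      + C (γ₁ * γ₂ + γ₁ * γ₃ + γ₂ * γ₃) * X - C (γ₁ * γ₂ * γ₃) := by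
    simp only [C_add, C_mul]; ring
  rw [hexp] at h
  have h2 := congrArg (coeff · 2) h
  have h1 := congrArg (coeff · 1) h
  have h0 := congrArg (coeff · 0) h
  simp only [coeff_add, coeff_sub, coeff_C_mul, coeff_X_pow, coeff_X, coeff_C] at h2 h1 h0
  norm_num at h2 h1 h0
  exact ⟨by linear_combination h2, h1, h0⟩

lemma roots_pairwise_ne_of_discr_ne_zero (hs : γ₁ + γ₂ + γ₃ = 0)
    (ha : a = γ₁ * γ₂ + γ₁ * γ₃ + γ₂ * γ₃) (hb : b = -(γ₁ * γ₂ * γ₃))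
    (hΔ : -16 * (4 * a ^ 3 + 27 * b ^ 2) ≠ 0) : γ₁ ≠ γ₂ ∧ γ₁ ≠ γ₃ ∧ γ₂ ≠ γ₃ := by
  have hdiscr : -16 * (4 * a ^ 3 + 27 * b ^ 2)
      = 16 * ((γ₁ - γ₂) * (γ₁ - γ₃) * (γ₂ - γ₃)) ^ 2 := by
    obtain rfl : γ₃ = -(γ₁ + γ₂) := by linear_combination hs
    subst ha hb; ring
  rw [hdiscr] at hΔ
  have hprod := pow_ne_zero_iff two_ne_zero |>.1 (right_ne_zero_of_mul hΔ)
  simp only [ne_eq, mul_eq_zero, sub_eq_zero, not_or] at hprod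
  exact ⟨hprod.1.1, hprod.1.2, hprod.2⟩

lemma cubic_eq_prod (hs : γ₁ + γ₂ + γ₃ = 0) (ha : a = γ₁ * γ₂ + γ₁ * γ₃ + γ₂ * γ₃)
    (hb : b = -(γ₁ * γ₂ * γ₃)) (x : k) :
    x ^ 3 + a * x + b = (x - γ₁) * (x - γ₂) * (x - γ₃) := by
  obtain rfl : γ₃ = -(γ₁ + γ₂) := by linear_combination hs
  subst ha hb; ring

lemma cubic_deriv_eq (hs : γ₁ + γ₂ + γ₃ = 0) (ha : a = γ₁ * γ₂ + γ₁ * γ₃ + γ₂ * γ₃) (x : k) :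
    3 * x ^ 2 + a = (x - γ₂) * (x - γ₃) + (x - γ₁) * (x - γ₃) + (x - γ₁) * (x - γ₂) := by
  obtain rfl : γ₃ = -(γ₁ + γ₂) := by linear_combination hs
  subst ha; ring

end Roots

section Halving

variable {k : Type*} [Field k] {a b γ₁ γ₂ γ₃ ω₁ ω₂ ω₃ x y : k}

structure IsHalvingTriple (γ₁ γ₂ γ₃ ω₁ ω₂ ω₃ x y : k) : Prop where
  sub_γ₁ : x - γ₁ = (ω₁ + ω₂) * (ω₁ + ω₃)
  sub_γ₂ : x - γ₂ = (ω₁ + ω₂) * (ω₂ + ω₃)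
  sub_γ₃ : x - γ₃ = (ω₁ + ω₃) * (ω₂ + ω₃)
  y_eq : y = (ω₁ + ω₂) * (ω₁ + ω₃) * (ω₂ + ω₃)

def halfRoot (a γ x y : k) : k := (3 * x ^ 2 + a) / (2 * y) - y / (x - γ)

lemma isHalvingTriple_of_sq_eq {xQ : k} (hω₁ : ω₁ ^ 2 = xQ - γ₁) (hω₂ : ω₂ ^ 2 = xQ - γ₂)
    (hω₃ : ω₃ ^ 2 = xQ - γ₃) :
    IsHalvingTriple γ₁ γ₂ γ₃ ω₁ ω₂ ω₃ (xQ + (ω₁ * ω₂ + ω₁ * ω₃ + ω₂ * ω₃))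
      ((ω₁ + ω₂) * (ω₁ + ω₃) * (ω₂ + ω₃)) :=
  ⟨by linear_combination -hω₁, by linear_combination -hω₂, by linear_combination -hω₃, rfl⟩

namespace IsHalvingTriple

lemma equation (T : IsHalvingTriple γ₁ γ₂ γ₃ ω₁ ω₂ ω₃ x y) (hs : γ₁ + γ₂ + γ₃ = 0)
    (ha : a = γ₁ * γ₂ + γ₁ * γ₃ + γ₂ * γ₃) (hb : b = -(γ₁ * γ₂ * γ₃)) :
    y ^ 2 = x ^ 3 + a * x + b := by
  rw [cubic_eq_prod hs ha hb, T.sub_γ₁, T.sub_γ₂, T.sub_γ₃, T.y_eq]; ring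

lemma slope_mul (T : IsHalvingTriple γ₁ γ₂ γ₃ ω₁ ω₂ ω₃ x y) (hs : γ₁ + γ₂ + γ₃ = 0)
    (ha : a = γ₁ * γ₂ + γ₁ * γ₃ + γ₂ * γ₃) :
    (ω₁ + ω₂ + ω₃) * (2 * y) = 3 * x ^ 2 + a := by
  rw [cubic_deriv_eq hs ha, T.sub_γ₁, T.sub_γ₂, T.sub_γ₃, T.y_eq]; ring

lemma sq_eq₁ (T : IsHalvingTriple γ₁ γ₂ γ₃ ω₁ ω₂ ω₃ x y) :
    ω₁ ^ 2 = x - (ω₁ * ω₂ + ω₁ * ω₃ + ω₂ * ω₃) - γ₁ := by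
  linear_combination -T.sub_γ₁

lemma sq_eq₂ (T : IsHalvingTriple γ₁ γ₂ γ₃ ω₁ ω₂ ω₃ x y) :
    ω₂ ^ 2 = x - (ω₁ * ω₂ + ω₁ * ω₃ + ω₂ * ω₃) - γ₂ := by
  linear_combination -T.sub_γ₂

lemma y_ne_zero (T : IsHalvingTriple γ₁ γ₂ γ₃ ω₁ ω₂ ω₃ x y) (h₁₂ : γ₁ ≠ γ₂) (h₁₃ : γ₁ ≠ γ₃)
    (h₂₃ : γ₂ ≠ γ₃) : y ≠ 0 := by
  rw [T.y_eq]
  refine mul_ne_zero (mul_ne_zero ?_ ?_) ?_ <;> intro h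
  · exact h₁₂ (by linear_combination T.sub_γ₂ - T.sub_γ₁ + (ω₂ - ω₁) * h)
  · exact h₁₃ (by linear_combination T.sub_γ₃ - T.sub_γ₁ + (ω₃ - ω₁) * h)
  · exact h₂₃ (by linear_combination T.sub_γ₃ - T.sub_γ₂ + (ω₃ - ω₂) * h)

lemma two_nsmul_some_eq_some_iff [DecidableEq k] (T : IsHalvingTriple γ₁ γ₂ γ₃ ω₁ ω₂ ω₃ x y)
    (h2 : (2 : k) ≠ 0) (hs : γ₁ + γ₂ + γ₃ = 0) (ha : a = γ₁ * γ₂ + γ₁ * γ₃ + γ₂ * γ₃)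
    {xQ yQ : k} (h : (shortWCurve a b).Nonsingular x y)
    (hQ : (shortWCurve a b).Nonsingular xQ yQ) (hy : y ≠ 0) :
    2 • Point.some x y h = Point.some xQ yQ hQ ↔
      x - (ω₁ * ω₂ + ω₁ * ω₃ + ω₂ * ω₃) = xQ ∧ ω₁ * ω₂ * ω₃ = yQ := by
  have hx : (ω₁ + ω₂ + ω₃) ^ 2 - 2 * x = x - (ω₁ * ω₂ + ω₁ * ω₃ + ω₂ * ω₃) := by
    linear_combination -T.sub_γ₁ - T.sub_γ₂ - T.sub_γ₃ - hs
  have hyQ : (ω₁ + ω₂ + ω₃) * (x - (x - (ω₁ * ω₂ + ω₁ * ω₃ + ω₂ * ω₃))) - y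
      = ω₁ * ω₂ * ω₃ := by
    rw [T.y_eq]; ring
  rw [shortWCurve_two_nsmul_some_eq_some_iff h2 h hQ hy (T.slope_mul hs ha), hx]
  constructor <;> rintro ⟨rfl, rfl⟩
  exacts [⟨rfl, hyQ.symm⟩, ⟨rfl, hyQ⟩]

lemma div_eq_sum (T : IsHalvingTriple γ₁ γ₂ γ₃ ω₁ ω₂ ω₃ x y) (h2 : (2 : k) ≠ 0)
    (hs : γ₁ + γ₂ + γ₃ = 0) (ha : a = γ₁ * γ₂ + γ₁ * γ₃ + γ₂ * γ₃) (hy : y ≠ 0) :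
    (3 * x ^ 2 + a) / (2 * y) = ω₁ + ω₂ + ω₃ :=
  div_eq_of_eq_mul (mul_ne_zero h2 hy) (T.slope_mul hs ha).symm

lemma halfRoot_eq₁ (T : IsHalvingTriple γ₁ γ₂ γ₃ ω₁ ω₂ ω₃ x y) (h2 : (2 : k) ≠ 0)
    (hs : γ₁ + γ₂ + γ₃ = 0) (ha : a = γ₁ * γ₂ + γ₁ * γ₃ + γ₂ * γ₃) (hy : y ≠ 0) :
    halfRoot a γ₁ x y = ω₁ := by
  have hy₁ : y = (ω₂ + ω₃) * (x - γ₁) := by rw [T.sub_γ₁, T.y_eq]; ring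
  rw [halfRoot, T.div_eq_sum h2 hs ha hy,
    div_eq_of_eq_mul (right_ne_zero_of_mul (hy₁ ▸ hy)) hy₁]
  ring

lemma halfRoot_eq₂ (T : IsHalvingTriple γ₁ γ₂ γ₃ ω₁ ω₂ ω₃ x y) (h2 : (2 : k) ≠ 0)
    (hs : γ₁ + γ₂ + γ₃ = 0) (ha : a = γ₁ * γ₂ + γ₁ * γ₃ + γ₂ * γ₃) (hy : y ≠ 0) :
    halfRoot a γ₂ x y = ω₂ := by
  have hy₂ : y = (ω₁ + ω₃) * (x - γ₂) := by rw [T.sub_γ₂, T.y_eq]; ring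
  rw [halfRoot, T.div_eq_sum h2 hs ha hy,
    div_eq_of_eq_mul (right_ne_zero_of_mul (hy₂ ▸ hy)) hy₂]
  ring

end IsHalvingTriple

lemma mul_halfRoot_add_halfRoot (h2 : (2 : k) ≠ 0) (hy : y ≠ 0)
    (hE : y ^ 2 = (x - γ₁) * (x - γ₂) * (x - γ₃))
    (hd : 3 * x ^ 2 + a = (x - γ₂) * (x - γ₃) + (x - γ₁) * (x - γ₃) + (x - γ₁) * (x - γ₂)) :
    y * (halfRoot a γ₁ x y + halfRoot a γ₂ x y) = (x - γ₁) * (x - γ₂) := by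
  have hu₁ : x - γ₁ ≠ 0 := fun h => hy (pow_eq_zero_iff two_ne_zero |>.1 (by rw [hE, h]; ring))
  have hu₂ : x - γ₂ ≠ 0 := fun h => hy (pow_eq_zero_iff two_ne_zero |>.1 (by rw [hE, h]; ring))
  have e₁ : y * (y / (x - γ₁)) = (x - γ₂) * (x - γ₃) := by
    rw [← mul_div_assoc, div_eq_iff hu₁, ← sq, hE]; ring
  have e₂ : y * (y / (x - γ₂)) = (x - γ₁) * (x - γ₃) := by
    rw [← mul_div_assoc, div_eq_iff hu₂, ← sq, hE]; ring
  have e₀ : 2 * (y * ((3 * x ^ 2 + a) / (2 * y))) = 3 * x ^ 2 + a := by field_simp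
  unfold halfRoot
  linear_combination e₀ - e₁ - e₂ + hd

lemma isHalvingTriple_halfRoot (h2 : (2 : k) ≠ 0) (hs : γ₁ + γ₂ + γ₃ = 0)
    (ha : a = γ₁ * γ₂ + γ₁ * γ₃ + γ₂ * γ₃) (hb : b = -(γ₁ * γ₂ * γ₃)) (hy : y ≠ 0)
    (h : y ^ 2 = x ^ 3 + a * x + b) :
    IsHalvingTriple γ₁ γ₂ γ₃ (halfRoot a γ₁ x y) (halfRoot a γ₂ x y) (halfRoot a γ₃ x y) x y := by
  rw [cubic_eq_prod hs ha hb] at h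
  have hd := cubic_deriv_eq hs ha x
  have h₁₂ := mul_halfRoot_add_halfRoot h2 hy h hd
  have h₁₃ : y * (halfRoot a γ₁ x y + halfRoot a γ₃ x y) = (x - γ₁) * (x - γ₃) :=
    mul_halfRoot_add_halfRoot (γ₃ := γ₂) h2 hy (by linear_combination h) (by linear_combination hd)
  have h₂₃ : y * (halfRoot a γ₂ x y + halfRoot a γ₃ x y) = (x - γ₂) * (x - γ₃) :=
    mul_halfRoot_add_halfRoot (γ₃ := γ₁) h2 hy (by linear_combination h) (by linear_combination hd)
  set ω₁ := halfRoot a γ₁ x y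
  set ω₂ := halfRoot a γ₂ x y
  set ω₃ := halfRoot a γ₃ x y
  have hy₂ : y ^ 2 ≠ 0 := pow_ne_zero 2 hy
  refine ⟨mul_left_cancel₀ hy₂ ?_, mul_left_cancel₀ hy₂ ?_, mul_left_cancel₀ hy₂ ?_,
    mul_left_cancel₀ (pow_ne_zero 3 hy) ?_⟩
  · linear_combination (x - γ₁) * h - (y * (ω₁ + ω₃)) * h₁₂ - ((x - γ₁) * (x - γ₂)) * h₁₃
  · linear_combination (x - γ₂) * h - (y * (ω₂ + ω₃)) * h₁₂ - ((x - γ₁) * (x - γ₂)) * h₂₃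
  · linear_combination (x - γ₃) * h - (y * (ω₂ + ω₃)) * h₁₃ - ((x - γ₁) * (x - γ₃)) * h₂₃
  · linear_combination (y ^ 2 + (x - γ₁) * (x - γ₂) * (x - γ₃)) * h
      - (y * (ω₁ + ω₃)) * (y * (ω₂ + ω₃)) * h₁₂
      - ((x - γ₁) * (x - γ₂)) * (y * (ω₂ + ω₃)) * h₁₃
      - ((x - γ₁) * (x - γ₂)) * ((x - γ₁) * (x - γ₃)) * h₂₃

end Halving

section Halves

variable {k : Type*} [Field k] [DecidableEq k] {a b γ₁ γ₂ γ₃ xQ yQ : k}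

def halfRoots (γ₁ γ₂ : k) : (shortWCurve a b).Point → k × k
  | .zero => 0
  | .some x y _ => (halfRoot a γ₁ x y, halfRoot a γ₂ x y)

lemma exists_eq_some_of_two_nsmul_eq_some (hQ : (shortWCurve a b).Nonsingular xQ yQ)
    {P : (shortWCurve a b).Point} (hP : 2 • P = Point.some xQ yQ hQ) :
    ∃ x y h, y ≠ 0 ∧ P = Point.some x y h := by
  rcases P with _ | ⟨x, y, h⟩
  · rw [← Point.zero_def, smul_zero] at hP
    exact absurd hP.symm (Point.some_ne_zero hQ)
  · refine ⟨x, y, h, ?_, rfl⟩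
    rintro rfl
    rw [shortWCurve_two_nsmul_some_of_Y_eq_zero] at hP
    exact Point.some_ne_zero hQ hP.symm

lemma exists_isHalvingTriple_of_two_nsmul_eq_some (h2 : (2 : k) ≠ 0) (hs : γ₁ + γ₂ + γ₃ = 0)
    (ha : a = γ₁ * γ₂ + γ₁ * γ₃ + γ₂ * γ₃) (hb : b = -(γ₁ * γ₂ * γ₃))
    (hQ : (shortWCurve a b).Nonsingular xQ yQ) {P : (shortWCurve a b).Point}
    (hP : 2 • P = Point.some xQ yQ hQ) {ω₁ ω₂ : k} (hω : halfRoots γ₁ γ₂ P = (ω₁, ω₂)) :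
    ∃ x y h ω₃, P = Point.some x y h ∧ IsHalvingTriple γ₁ γ₂ γ₃ ω₁ ω₂ ω₃ x y ∧
      x - (ω₁ * ω₂ + ω₁ * ω₃ + ω₂ * ω₃) = xQ ∧ ω₁ * ω₂ * ω₃ = yQ := by
  obtain ⟨x, y, h, hy, rfl⟩ := exists_eq_some_of_two_nsmul_eq_some hQ hP
  obtain ⟨rfl, rfl⟩ := Prod.ext_iff.1 hω
  have T := isHalvingTriple_halfRoot h2 hs ha hb hy (shortWCurve_equation_iff.1 h.1)
  exact ⟨x, y, h, _, rfl, T, (T.two_nsmul_some_eq_some_iff h2 hs ha h hQ hy).1 hP⟩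

lemma mapsTo_halfRoots (h2 : (2 : k) ≠ 0) (hs : γ₁ + γ₂ + γ₃ = 0)
    (ha : a = γ₁ * γ₂ + γ₁ * γ₃ + γ₂ * γ₃) (hb : b = -(γ₁ * γ₂ * γ₃))
    (hQ : (shortWCurve a b).Nonsingular xQ yQ) :
    Set.MapsTo (halfRoots γ₁ γ₂) {P | 2 • P = Point.some xQ yQ hQ}
      {ω | ω.1 ^ 2 = xQ - γ₁ ∧ ω.2 ^ 2 = xQ - γ₂} := by
  intro P hP
  obtain ⟨x, y, h, ω₃, -, T, hx, -⟩ :=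
    exists_isHalvingTriple_of_two_nsmul_eq_some h2 hs ha hb hQ hP rfl
  exact ⟨hx ▸ T.sq_eq₁, hx ▸ T.sq_eq₂⟩

lemma injOn_halfRoots (h2 : (2 : k) ≠ 0) (hs : γ₁ + γ₂ + γ₃ = 0)
    (ha : a = γ₁ * γ₂ + γ₁ * γ₃ + γ₂ * γ₃) (hb : b = -(γ₁ * γ₂ * γ₃))
    (hQ : (shortWCurve a b).Nonsingular xQ yQ) (hyQ : yQ ≠ 0) :
    Set.InjOn (halfRoots γ₁ γ₂) {P | 2 • P = Point.some xQ yQ hQ} := by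
  intro P hP P' hP' hPP'
  obtain ⟨x, y, h, ω₃, rfl, T, hx, hy⟩ :=
    exists_isHalvingTriple_of_two_nsmul_eq_some h2 hs ha hb hQ hP rfl
  obtain ⟨x', y', h', ω₃', rfl, T', hx', hy'⟩ :=
    exists_isHalvingTriple_of_two_nsmul_eq_some h2 hs ha hb hQ hP' hPP'.symm
  have hω : ω₃ = ω₃' :=
    mul_left_cancel₀ (left_ne_zero_of_mul (hy ▸ hyQ)) (hy.trans hy'.symm)
  subst hω
  obtain rfl : x = x' := by linear_combination hx - hx'
  obtain rfl : y = y' := T.y_eq.trans T'.y_eq.symm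
  rfl

lemma surjOn_halfRoots (h2 : (2 : k) ≠ 0) (hs : γ₁ + γ₂ + γ₃ = 0)
    (ha : a = γ₁ * γ₂ + γ₁ * γ₃ + γ₂ * γ₃) (hb : b = -(γ₁ * γ₂ * γ₃))
    (hQ : (shortWCurve a b).Nonsingular xQ yQ)
    (h₁₂ : γ₁ ≠ γ₂) (h₁₃ : γ₁ ≠ γ₃) (h₂₃ : γ₂ ≠ γ₃) (hyQ : yQ ≠ 0) :
    Set.SurjOn (halfRoots γ₁ γ₂) {P | 2 • P = Point.some xQ yQ hQ}
      {ω | ω.1 ^ 2 = xQ - γ₁ ∧ ω.2 ^ 2 = xQ - γ₂} := by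
  rintro ⟨ω₁, ω₂⟩ ⟨hω₁ : ω₁ ^ 2 = xQ - γ₁, hω₂ : ω₂ ^ 2 = xQ - γ₂⟩
  have hQ' : yQ ^ 2 = (xQ - γ₁) * (xQ - γ₂) * (xQ - γ₃) := by
    rw [← cubic_eq_prod hs ha hb, ← shortWCurve_equation_iff]; exact hQ.1
  have hω₁₂ : ω₁ * ω₂ ≠ 0 := by
    intro h0
    apply hyQ
    apply pow_eq_zero_iff two_ne_zero |>.1
    rw [hQ', ← hω₁, ← hω₂]
    linear_combination (ω₁ * ω₂ * (xQ - γ₃)) * h0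
  have hω₃ : (yQ / (ω₁ * ω₂)) ^ 2 = xQ - γ₃ := by
    rw [div_pow, div_eq_iff (pow_ne_zero 2 hω₁₂), hQ', ← hω₁, ← hω₂]; ring
  have T := isHalvingTriple_of_sq_eq hω₁ hω₂ hω₃
  have hy := T.y_ne_zero h₁₂ h₁₃ h₂₃
  have h := shortWCurve_nonsingular_of_Y_ne_zero h2 hy (T.equation hs ha hb)
  refine ⟨Point.some _ _ h, (T.two_nsmul_some_eq_some_iff h2 hs ha h hQ hy).2 ⟨by ring, ?_⟩,
    Prod.ext (T.halfRoot_eq₁ h2 hs ha hy) (T.halfRoot_eq₂ h2 hs ha hy)⟩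
  rw [mul_div_cancel₀ _ hω₁₂]

end Halves

lemma finite_setOf_sq_eq_and_sq_eq {k : Type*} [Field k] (c₁ c₂ : k) :
    {ω : k × k | ω.1 ^ 2 = c₁ ∧ ω.2 ^ 2 = c₂}.Finite := by
  classical
  refine ((nthRoots 2 c₁).toFinset ×ˢ (nthRoots 2 c₂).toFinset).finite_toSet.subset ?_
  intro ω hω
  simp [mem_nthRoots, hω.1, hω.2]

open Classical in
theorem stmt_10_general {k : Type*} [Field k] (h2 : (2 : k) ≠ 0)
    (a b : k) (hΔ : -16 * (4 * a ^ 3 + 27 * b ^ 2) ≠ 0)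
    (γ₁ γ₂ γ₃ : k)
    (hfact : (X ^ 3 + C a * X + C b : k[X])
        = (X - C γ₁) * (X - C γ₂) * (X - C γ₃))
    (xQ yQ : k) (hQ : (shortWCurve a b).Nonsingular xQ yQ) (hyQ : yQ ≠ 0) :
    ({P : (shortWCurve a b).Point |
        2 • P = WeierstrassCurve.Affine.Point.some xQ yQ hQ}).Finite ∧
    ({ω : k × k | ω.1 ^ 2 = xQ - γ₁ ∧ ω.2 ^ 2 = xQ - γ₂}).Finite ∧
    Nat.card {P : (shortWCurve a b).Point |
        2 • P = WeierstrassCurve.Affine.Point.some xQ yQ hQ} =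
      Nat.card {ω : k × k | ω.1 ^ 2 = xQ - γ₁ ∧ ω.2 ^ 2 = xQ - γ₂} := by
  obtain ⟨hs, ha, hb⟩ := depressed_cubic_vieta hfact
  obtain ⟨h₁₂, h₁₃, h₂₃⟩ := roots_pairwise_ne_of_discr_ne_zero hs ha hb hΔ
  have hbij : Set.BijOn (halfRoots γ₁ γ₂) _ _ :=
    ⟨mapsTo_halfRoots h2 hs ha hb hQ, injOn_halfRoots h2 hs ha hb hQ hyQ,
      surjOn_halfRoots h2 hs ha hb hQ h₁₂ h₁₃ h₂₃ hyQ⟩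
  have hfin := finite_setOf_sq_eq_and_sq_eq (xQ - γ₁) (xQ - γ₂)
  exact ⟨hbij.finite_iff_finite.2 hfin, hfin, Nat.card_congr (hbij.equiv _)⟩

open Classical in
theorem stmt_10 {k : Type*} [Field k] (h2 : (2 : k) ≠ 0) (h3 : (3 : k) ≠ 0)
    (a b : k) (hΔ : -16 * (4 * a ^ 3 + 27 * b ^ 2) ≠ 0)
    (γ₁ γ₂ γ₃ : k)
    (hfact : (X ^ 3 + C a * X + C b : k[X])
        = (X - C γ₁) * (X - C γ₂) * (X - C γ₃))
    (xQ yQ : k) (hQ : (shortWCurve a b).Nonsingular xQ yQ) (hyQ : yQ ≠ 0) :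
    ({P : (shortWCurve a b).Point |
        2 • P = WeierstrassCurve.Affine.Point.some xQ yQ hQ}).Finite ∧
    ({ω : k × k | ω.1 ^ 2 = xQ - γ₁ ∧ ω.2 ^ 2 = xQ - γ₂}).Finite ∧
    Nat.card {P : (shortWCurve a b).Point |
        2 • P = WeierstrassCurve.Affine.Point.some xQ yQ hQ} =
      Nat.card {ω : k × k | ω.1 ^ 2 = xQ - γ₁ ∧ ω.2 ^ 2 = xQ - γ₂} :=
  stmt_10_general h2 a b hΔ γ₁ γ₂ γ₃ hfact xQ yQ hQ hyQ
end

section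
/- Let γ₁, γ₂ ∈ k be two distinct roots of x³ + a·x + b, and let P = (x_P, y_P) and Q = (x_Q, y_Q) be affine points of E(k) with 2•P = Q. Then y_P ≠ 0, x_P ≠ γ₁, x_P ≠ γ₂, and the elements ωᵢ := ((3x_P² + a)·(x_Q − γᵢ) + 2y_P·y_Q)/(2y_P·(x_P − γᵢ)) for i = 1, 2 satisfy ωᵢ² = x_Q − γᵢ and x_P·((ω₂ − ω₁)·x_Q + ω₁γ₂ − ω₂γ₁) = y_Q·(γ₂ − γ₁) + γ₁γ₂·(ω₁ − ω₂) − x_Q·(ω₁γ₁ − ω₂γ₂). -/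
open WeierstrassCurve.Affine

namespace shortWCurve

variable {k : Type*} [Field k] {a b : k}

lemma equation_iff {x y : k} : (shortWCurve a b).Equation x y ↔ y ^ 2 = x ^ 3 + a * x + b := by
  rw [WeierstrassCurve.Affine.equation_iff]
  simp only [shortWCurve]
  constructor <;> intro h <;> linear_combination h

lemma negY_eq (x y : k) : (shortWCurve a b).negY x y = -y := by
  simp [negY, shortWCurve]

lemma Y_ne_zero_of_two_smul_eq_some [DecidableEq k] {xP yP xQ yQ : k}
    {hP : (shortWCurve a b).Nonsingular xP yP} {hQ : (shortWCurve a b).Nonsingular xQ yQ}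
    (hPQ : 2 • Point.some xP yP hP = Point.some xQ yQ hQ) : yP ≠ 0 := by
  rintro rfl
  rw [two_smul, Point.add_self_of_Y_eq (by rw [negY_eq, neg_zero])] at hPQ
  exact Point.some_ne_zero hQ hPQ.symm

lemma coords_of_two_smul_eq_some [DecidableEq k] {xP yP xQ yQ : k}
    {hP : (shortWCurve a b).Nonsingular xP yP} {hQ : (shortWCurve a b).Nonsingular xQ yQ} (h2 : (2 : k) ≠ 0)
    (hPQ : 2 • Point.some xP yP hP = Point.some xQ yQ hQ) :
    xQ = ((3 * xP ^ 2 + a) / (2 * yP)) ^ 2 - 2 * xP ∧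
      yQ = (3 * xP ^ 2 + a) / (2 * yP) * (xP - xQ) - yP := by
  have hyP := Y_ne_zero_of_two_smul_eq_some hPQ
  have hy : yP ≠ (shortWCurve a b).negY xP yP := by
    rw [negY_eq]
    intro h
    exact mul_ne_zero h2 hyP (by linear_combination h)
  rw [two_smul, Point.add_self_of_Y_ne hy, Point.some.injEq, slope_of_Y_ne rfl hy] at hPQ
  obtain ⟨hx, hy⟩ := hPQ
  simp only [addX, addY, negAddY, negY, shortWCurve] at hx hy
  constructor
  · rw [← hx]; ring
  · rw [← hy, ← hx]; ring

lemma X_ne_of_root {x y γ : k} (hxy : (shortWCurve a b).Equation x y) (hy : y ≠ 0)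
    (hγ : γ ^ 3 + a * γ + b = 0) : x ≠ γ := by
  rintro rfl
  exact hy (pow_eq_zero_iff two_ne_zero |>.mp (by linear_combination equation_iff.mp hxy + hγ))

end shortWCurve

section TangentAlgebra

variable {k : Type*} [Field k] {a b x y L xQ yQ γ : k}

lemma div_eq_sub_div_of_tangent (hL : L * (2 * y) = 3 * x ^ 2 + a)
    (hyQ : yQ = L * (x - xQ) - y) (h2y : 2 * y ≠ 0) (hx : x - γ ≠ 0) :
    ((3 * x ^ 2 + a) * (xQ - γ) + 2 * y * yQ) / (2 * y * (x - γ)) = L - y / (x - γ) := by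
  rw [sub_div' hx, div_eq_div_iff (mul_ne_zero h2y hx) hx]
  linear_combination 2 * y * (x - γ) * hyQ - (x - γ) * (xQ - γ) * hL

lemma sub_div_sq_of_tangent (hL : L * (2 * y) = 3 * x ^ 2 + a) (hxQ : xQ = L ^ 2 - 2 * x)
    (hxy : y ^ 2 = x ^ 3 + a * x + b) (hγ : γ ^ 3 + a * γ + b = 0) (hx : x - γ ≠ 0) :
    (L - y / (x - γ)) ^ 2 = xQ - γ := by
  rw [sub_div' hx, div_pow, div_eq_iff (pow_ne_zero 2 hx)]
  linear_combination (-(x - γ)) * hL + hxy + hγ - (x - γ) ^ 2 * hxQ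

lemma omega_relation {γ₁ γ₂ ω₁ ω₂ : k} (hyQ : yQ = L * (x - xQ) - y)
    (hω₁ : ω₁ * (x - γ₁) = L * (x - γ₁) - y) (hω₂ : ω₂ * (x - γ₂) = L * (x - γ₂) - y) :
    x * ((ω₂ - ω₁) * xQ + ω₁ * γ₂ - ω₂ * γ₁) =
      yQ * (γ₂ - γ₁) + γ₁ * γ₂ * (ω₁ - ω₂) - xQ * (ω₁ * γ₁ - ω₂ * γ₂) := by
  linear_combination (xQ - γ₁) * hω₂ - (xQ - γ₂) * hω₁ - (γ₂ - γ₁) * hyQ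

end TangentAlgebra

open Classical in
theorem stmt_14_general {k : Type*} [Field k] (h2 : (2 : k) ≠ 0)
    (a b : k)
    (γ₁ γ₂ : k) (hγ₁ : γ₁ ^ 3 + a * γ₁ + b = 0) (hγ₂ : γ₂ ^ 3 + a * γ₂ + b = 0)
    (xP yP xQ yQ : k)
    (hP : (shortWCurve a b).Nonsingular xP yP)
    (hQ : (shortWCurve a b).Nonsingular xQ yQ)
    (hPQ : 2 • (WeierstrassCurve.Affine.Point.some xP yP hP)
        = WeierstrassCurve.Affine.Point.some xQ yQ hQ) :
    yP ≠ 0 ∧ xP ≠ γ₁ ∧ xP ≠ γ₂ ∧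
    (let ω₁ : k := ((3 * xP ^ 2 + a) * (xQ - γ₁) + 2 * yP * yQ) / (2 * yP * (xP - γ₁))
     let ω₂ : k := ((3 * xP ^ 2 + a) * (xQ - γ₂) + 2 * yP * yQ) / (2 * yP * (xP - γ₂))
     ω₁ ^ 2 = xQ - γ₁ ∧ ω₂ ^ 2 = xQ - γ₂ ∧
     xP * ((ω₂ - ω₁) * xQ + ω₁ * γ₂ - ω₂ * γ₁) =
       yQ * (γ₂ - γ₁) + γ₁ * γ₂ * (ω₁ - ω₂) - xQ * (ω₁ * γ₁ - ω₂ * γ₂)) := by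
  have hyP := shortWCurve.Y_ne_zero_of_two_smul_eq_some hPQ
  obtain ⟨hxQ, hyQ⟩ := shortWCurve.coords_of_two_smul_eq_some h2 hPQ
  have hx₁ := shortWCurve.X_ne_of_root hP.1 hyP hγ₁
  have hx₂ := shortWCurve.X_ne_of_root hP.1 hyP hγ₂
  set L := (3 * xP ^ 2 + a) / (2 * yP)
  have h2y : 2 * yP ≠ 0 := mul_ne_zero h2 hyP
  have hL : L * (2 * yP) = 3 * xP ^ 2 + a := div_mul_cancel₀ _ h2y
  have hxy := shortWCurve.equation_iff.mp hP.1
  refine ⟨hyP, hx₁, hx₂, ?_⟩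
  intro ω₁ ω₂
  have hd₁ := sub_ne_zero.mpr hx₁
  have hd₂ := sub_ne_zero.mpr hx₂
  have hω₁ : ω₁ = L - yP / (xP - γ₁) := div_eq_sub_div_of_tangent hL hyQ h2y hd₁
  have hω₂ : ω₂ = L - yP / (xP - γ₂) := div_eq_sub_div_of_tangent hL hyQ h2y hd₂
  refine ⟨hω₁ ▸ sub_div_sq_of_tangent hL hxQ hxy hγ₁ hd₁,
    hω₂ ▸ sub_div_sq_of_tangent hL hxQ hxy hγ₂ hd₂, omega_relation hyQ ?_ ?_⟩
  · rw [hω₁, sub_mul, div_mul_cancel₀ _ hd₁]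
  · rw [hω₂, sub_mul, div_mul_cancel₀ _ hd₂]

open Classical in
theorem stmt_14 {k : Type*} [Field k] (h2 : (2 : k) ≠ 0) (h3 : (3 : k) ≠ 0)
    (a b : k) (hΔ : -16 * (4 * a ^ 3 + 27 * b ^ 2) ≠ 0)
    (γ₁ γ₂ : k) (hγ₁ : γ₁ ^ 3 + a * γ₁ + b = 0) (hγ₂ : γ₂ ^ 3 + a * γ₂ + b = 0)
    (hγ : γ₁ ≠ γ₂)
    (xP yP xQ yQ : k)
    (hP : (shortWCurve a b).Nonsingular xP yP)
    (hQ : (shortWCurve a b).Nonsingular xQ yQ)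
    (hPQ : 2 • (WeierstrassCurve.Affine.Point.some xP yP hP)
        = WeierstrassCurve.Affine.Point.some xQ yQ hQ) :
    yP ≠ 0 ∧ xP ≠ γ₁ ∧ xP ≠ γ₂ ∧
    (let ω₁ : k := ((3 * xP ^ 2 + a) * (xQ - γ₁) + 2 * yP * yQ) / (2 * yP * (xP - γ₁))
     let ω₂ : k := ((3 * xP ^ 2 + a) * (xQ - γ₂) + 2 * yP * yQ) / (2 * yP * (xP - γ₂))
     ω₁ ^ 2 = xQ - γ₁ ∧ ω₂ ^ 2 = xQ - γ₂ ∧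
     xP * ((ω₂ - ω₁) * xQ + ω₁ * γ₂ - ω₂ * γ₁) =
       yQ * (γ₂ - γ₁) + γ₁ * γ₂ * (ω₁ - ω₂) - xQ * (ω₁ * γ₁ - ω₂ * γ₂)) :=
  stmt_14_general h2 a b γ₁ γ₂ hγ₁ hγ₂ xP yP xQ yQ hP hQ hPQ
end
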